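/- arXiv:2603.11270 — 4 statements merged into one kernel-verified Lean document; each statement's English description precedes it below -/
import Mathlib

section
/- Let F = (V, E) be a finite simple graph of maximum degree at most 5. Then there exists a partition of E into two disjoint sets E1 and E2 together with an orientation of the edges in E2 such that the graph (V, E1) is a disjoint union of stars and every vertex of V has out-degree at most 2 with respect to the orientation of E2. -/
open SimpleGraph

noncomputable section

/-- The degree of a vertex `v` in a simple graph `G` (as a set cardinality). -/
def gdeg {V : Type*} (G : SimpleGraph V) (v : V) : ℕ := {u | G.Adj v u}.ncard

/-- A graph is a disjoint union of stars iff every edge has an endpoint of degree one. -/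
def IsStarForest {V : Type*} (G : SimpleGraph V) : Prop :=
  ∀ u v : V, G.Adj u v → gdeg G u = 1 ∨ gdeg G v = 1

namespace StarAux


variable {V : Type*}

def Covers (σ : Finset (V × V)) (v : V) : Prop := ∃ p ∈ σ, p.1 = v ∨ p.2 = v

def Good (F : SimpleGraph V) (σ : Finset (V × V)) : Prop :=
  (∀ p ∈ σ, F.Adj p.1 p.2) ∧
  (∀ p ∈ σ, ∀ q ∈ σ, p.1 = q.1 → p = q) ∧
  (∀ p ∈ σ, ∀ q ∈ σ, p.1 ≠ q.2)

lemma step (F : SimpleGraph V) (σ : Finset (V × V)) (hg : Good F σ)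
    {v u : V} (hadj : F.Adj v u) (hv : ¬ Covers σ v) :
    ∃ σ' : Finset (V × V), Good F σ' ∧ Covers σ' v ∧ ∀ w, Covers σ w → Covers σ' w := by
  classical
  obtain ⟨hA, hL, hC⟩ := hg
  have hvne : v ≠ u := hadj.ne
  have hv1 : ∀ p ∈ σ, p.1 ≠ v := fun p hp h => hv ⟨p, hp, Or.inl h⟩
  have hv2 : ∀ p ∈ σ, p.2 ≠ v := fun p hp h => hv ⟨p, hp, Or.inr h⟩
  by_cases hleaf : ∃ p ∈ σ, p.1 = u
  · obtain ⟨p₀, hp₀, hp₀1⟩ := hleaf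
    have hadj2 : F.Adj u p₀.2 := by have := hA p₀ hp₀; rwa [hp₀1] at this
    by_cases hc1 : ∃ q ∈ σ, q ≠ p₀ ∧ q.2 = p₀.2
    · -- u is a leaf, its center has another leaf: re-point u's star edge to v
      obtain ⟨q₀, hq₀, hq₀ne, hq₀2⟩ := hc1
      refine ⟨insert (u, v) (σ.erase p₀), ⟨?_, ?_, ?_⟩, ?_, ?_⟩
      · intro p hp
        rcases Finset.mem_insert.mp hp with rfl | hp
        · exact hadj.symm
        · exact hA p (Finset.mem_of_mem_erase hp)
      · intro p hp q hq h1
        rcases Finset.mem_insert.mp hp with rfl | hp <;>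
          rcases Finset.mem_insert.mp hq with rfl | hq
        · rfl
        · exfalso
          have hq' := Finset.mem_of_mem_erase hq
          exact (Finset.ne_of_mem_erase hq) (hL q hq' p₀ hp₀ (by rw [← h1, hp₀1]))
        · exfalso
          have hp' := Finset.mem_of_mem_erase hp
          exact (Finset.ne_of_mem_erase hp) (hL p hp' p₀ hp₀ (by rw [h1, hp₀1]))
        · exact hL p (Finset.mem_of_mem_erase hp) q (Finset.mem_of_mem_erase hq) h1
      · intro p hp q hq
        rcases Finset.mem_insert.mp hp with rfl | hp <;>
          rcases Finset.mem_insert.mp hq with rfl | hq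
        · exact fun h => hvne h.symm
        · have := hC p₀ hp₀ q (Finset.mem_of_mem_erase hq); rwa [hp₀1] at this
        · exact hv1 p (Finset.mem_of_mem_erase hp)
        · exact hC p (Finset.mem_of_mem_erase hp) q (Finset.mem_of_mem_erase hq)
      · exact ⟨(u, v), Finset.mem_insert_self _ _, Or.inr rfl⟩
      · rintro w ⟨p, hp, hw⟩
        by_cases hpp : p = p₀
        · subst hpp
          rcases hw with h | h
          · exact ⟨(u, v), Finset.mem_insert_self _ _, Or.inl (by rw [← h, hp₀1])⟩
          · exact ⟨q₀, Finset.mem_insert_of_mem (Finset.mem_erase.mpr ⟨hq₀ne, hq₀⟩),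
              Or.inr (by rw [hq₀2, h])⟩
        · exact ⟨p, Finset.mem_insert_of_mem (Finset.mem_erase.mpr ⟨hpp, hp⟩), hw⟩
    · -- u is a leaf of a single-edge star: make u the center
      push_neg at hc1
      have hp₀2u : p₀.2 ≠ u := hadj2.ne'
      have hp₀2v : p₀.2 ≠ v := hv2 p₀ hp₀
      have hmem3 : ∀ {p : V × V}, p ∈ insert (p₀.2, u) (insert (v, u) (σ.erase p₀)) →
          p = (p₀.2, u) ∨ p = (v, u) ∨ (p ∈ σ ∧ p ≠ p₀) := by
        intro p hp
        rcases Finset.mem_insert.mp hp with h | hp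
        · exact Or.inl h
        rcases Finset.mem_insert.mp hp with h | hp
        · exact Or.inr (Or.inl h)
        · exact Or.inr (Or.inr ⟨Finset.mem_of_mem_erase hp, Finset.ne_of_mem_erase hp⟩)
      have holdleaf : ∀ {q : V × V}, q ∈ σ → q ≠ p₀ → q.1 ≠ u := by
        intro q hq hqne h
        exact hqne (hL q hq p₀ hp₀ (by rw [h, hp₀1]))
      refine ⟨insert (p₀.2, u) (insert (v, u) (σ.erase p₀)), ⟨?_, ?_, ?_⟩, ?_, ?_⟩
      · intro p hp
        rcases hmem3 hp with rfl | rfl | ⟨hp, _⟩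
        · exact hadj2.symm
        · exact hadj
        · exact hA p hp
      · intro p hp q hq h1
        rcases hmem3 hp with rfl | rfl | ⟨hp, hpne⟩ <;>
          rcases hmem3 hq with rfl | rfl | ⟨hq, hqne⟩
        · rfl
        · exact absurd h1 hp₀2v
        · exact absurd h1.symm (hC q hq p₀ hp₀)
        · exact absurd h1.symm hp₀2v
        · rfl
        · exact absurd h1.symm (hv1 q hq)
        · exact absurd h1 (hC p hp p₀ hp₀)
        · exact absurd h1 (hv1 p hp)
        · exact hL p hp q hq h1
      · intro p hp q hq
        rcases hmem3 hp with rfl | rfl | ⟨hp, hpne⟩ <;>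
          rcases hmem3 hq with rfl | rfl | ⟨hq, hqne⟩
        · exact hp₀2u
        · exact hp₀2u
        · exact fun h => hc1 q hq hqne h.symm
        · exact hvne
        · exact hvne
        · exact fun h => hv2 q hq h.symm
        · exact holdleaf hp hpne
        · exact holdleaf hp hpne
        · exact hC p hp q hq
      · exact ⟨(v, u), Finset.mem_insert_of_mem (Finset.mem_insert_self _ _), Or.inl rfl⟩
      · rintro w ⟨p, hp, hw⟩
        by_cases hpp : p = p₀
        · rcases hw with h | h
          · exact ⟨(v, u), Finset.mem_insert_of_mem (Finset.mem_insert_self _ _),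
              Or.inr (by rw [← h, hpp, hp₀1])⟩
          · exact ⟨(p₀.2, u), Finset.mem_insert_self _ _, Or.inl (by rw [← h, hpp])⟩
        · exact ⟨p, Finset.mem_insert_of_mem (Finset.mem_insert_of_mem
            (Finset.mem_erase.mpr ⟨hpp, hp⟩)), hw⟩
  · -- no pair has u as a leaf: attach v as a leaf with center u
    push_neg at hleaf
    refine ⟨insert (v, u) σ, ⟨?_, ?_, ?_⟩, ?_, ?_⟩
    · intro p hp
      rcases Finset.mem_insert.mp hp with rfl | hp
      · exact hadj
      · exact hA p hp
    · intro p hp q hq h1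
      rcases Finset.mem_insert.mp hp with rfl | hp <;>
        rcases Finset.mem_insert.mp hq with rfl | hq
      · rfl
      · exact absurd h1.symm (hv1 q hq)
      · exact absurd h1 (hv1 p hp)
      · exact hL p hp q hq h1
    · intro p hp q hq
      rcases Finset.mem_insert.mp hp with rfl | hp <;>
        rcases Finset.mem_insert.mp hq with rfl | hq
      · exact hvne
      · exact fun h => hv2 q hq h.symm
      · exact hleaf p hp
      · exact hC p hp q hq
    · exact ⟨(v, u), Finset.mem_insert_self _ _, Or.inl rfl⟩
    · rintro w ⟨p, hp, hw⟩
      exact ⟨p, Finset.mem_insert_of_mem hp, hw⟩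

lemma exists_good (F : SimpleGraph V) (W : Finset V)
    (hW : ∀ v ∈ W, ∃ u, F.Adj v u) :
    ∃ σ : Finset (V × V), Good F σ ∧ ∀ v ∈ W, Covers σ v := by
  classical
  induction W using Finset.induction_on with
  | empty => exact ⟨∅, ⟨by simp, by simp, by simp⟩, by simp⟩
  | @insert a W ha ih =>
    obtain ⟨σ, hgood, hcov⟩ := ih (fun v hv => hW v (Finset.mem_insert_of_mem hv))
    by_cases hca : Covers σ a
    · refine ⟨σ, hgood, fun v hvm => ?_⟩
      rcases Finset.mem_insert.mp hvm with rfl | hvm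
      · exact hca
      · exact hcov v hvm
    · obtain ⟨u, hadj⟩ := hW a (Finset.mem_insert_self _ _)
      obtain ⟨σ', hgood', hcov', hpres⟩ := step F σ hgood hadj hca
      refine ⟨σ', hgood', fun v hvm => ?_⟩
      rcases Finset.mem_insert.mp hvm with rfl | hvm
      · exact hcov'
      · exact hpres v (hcov v hvm)


lemma gdeg_eq_degree [Fintype V] (F : SimpleGraph V) [DecidableRel F.Adj] (v : V) :
    gdeg F v = F.degree v := by
  classical
  have h1 : {u | F.Adj v u} = ↑(F.neighborFinset v) := by
    ext u; simp [SimpleGraph.mem_neighborFinset]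
  rw [gdeg, h1, Set.ncard_coe_finset]
  rfl

end StarAux

/-- a graph of maximum degree at most 5 admits a partition of its edge set
into `E1` and `E2` together with an orientation `D` of the edges in `E2` such that
`(V, E1)` is a disjoint union of stars and every vertex has out-degree at most 2
with respect to the orientation. -/
theorem stmt_0 {V : Type*} [Fintype V] (F : SimpleGraph V)
    (hdeg : ∀ v : V, gdeg F v ≤ 5) :
    ∃ (E1 E2 : Set (Sym2 V)) (D : Set (V × V)),
      E1 ∪ E2 = F.edgeSet ∧ Disjoint E1 E2 ∧
      IsStarForest (SimpleGraph.fromEdgeSet E1) ∧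
      (∀ p ∈ D, s(p.1, p.2) ∈ E2) ∧
      (∀ u v : V, s(u, v) ∈ E2 → ((u, v) ∈ D ↔ (v, u) ∉ D)) ∧
      (∀ v : V, {u | (v, u) ∈ D}.ncard ≤ 2) := by
  classical
  -- a star forest covering every vertex of degree 5
  obtain ⟨σ, ⟨hA, hL, hC⟩, hcov⟩ := StarAux.exists_good F
      (Finset.univ.filter fun v => gdeg F v = 5)
      (fun v hv => by
        have h5 : gdeg F v = 5 := (Finset.mem_filter.mp hv).2
        have hne : {u | F.Adj v u}.Nonempty := by
          apply Set.nonempty_of_ncard_ne_zero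
          rw [show {u | F.Adj v u}.ncard = gdeg F v from rfl, h5]
          omega
        exact hne)
  set E1fin : Finset (Sym2 V) := σ.image (fun p => s(p.1, p.2)) with hE1def
  have hE1sub : E1fin ⊆ F.edgeFinset := by
    intro e he
    obtain ⟨p, hp, rfl⟩ := Finset.mem_image.mp he
    exact SimpleGraph.mem_edgeFinset.mpr ((SimpleGraph.mem_edgeSet F).mpr (hA p hp))
  set E2fin : Finset (Sym2 V) := F.edgeFinset \ E1fin with hE2def
  -- Hall system
  set t : {e : Sym2 V // e ∈ E2fin} → Finset (V × Fin 2) :=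
    (fun e => (Finset.univ.filter (fun x => x ∈ e.1)) ×ˢ Finset.univ) with htdef
  have hdiag : ∀ e : {e : Sym2 V // e ∈ E2fin}, ¬ e.1.IsDiag := fun e =>
    SimpleGraph.not_isDiag_of_mem_edgeSet F
      (SimpleGraph.mem_edgeFinset.mp (Finset.mem_sdiff.mp e.2).1)
  have hcard2 : ∀ e : {e : Sym2 V // e ∈ E2fin},
      (Finset.univ.filter (fun x => x ∈ e.1)).card = 2 := by
    rintro ⟨e, he⟩
    induction e using Sym2.ind with
    | _ a b =>
      have hab : a ≠ b := by
        have := hdiag ⟨s(a, b), he⟩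
        simpa [Sym2.mk_isDiag_iff] using this
      have heq : (Finset.univ.filter (fun x => x ∈ s(a, b))) = {a, b} := by
        ext x; simp [Sym2.mem_iff]
      rw [heq, Finset.card_insert_of_notMem (by simp [hab]), Finset.card_singleton]
  -- degree bound: at most 4 edges of E2 at each vertex
  have hbound : ∀ (s : Finset {e : Sym2 V // e ∈ E2fin}) (w : V),
      (s.filter (fun e => w ∈ e.1)).card ≤ 4 := by
    intro s w
    have hinj : ((s.filter (fun e => w ∈ e.1)).image (fun e => e.1)).card
        = (s.filter (fun e => w ∈ e.1)).card :=
      Finset.card_image_of_injective _ Subtype.val_injective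
    set I : Finset (Sym2 V) := (s.filter (fun e => w ∈ e.1)).image (fun e => e.1) with hIdef
    have hIsub : I ⊆ F.incidenceFinset w := by
      intro e he
      obtain ⟨e', he', rfl⟩ := Finset.mem_image.mp he
      have h1 := Finset.mem_filter.mp he'
      have h2 : e'.1 ∈ F.edgeFinset := (Finset.mem_sdiff.mp e'.2).1
      rw [SimpleGraph.incidenceFinset_eq_filter]
      exact Finset.mem_filter.mpr ⟨h2, h1.2⟩
    have hdeg5 : (F.incidenceFinset w).card ≤ 5 := by
      rw [SimpleGraph.card_incidenceFinset_eq_degree, ← StarAux.gdeg_eq_degree]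
      exact hdeg w
    rw [← hinj]
    rcases Nat.lt_or_ge (gdeg F w) 5 with h4 | h5
    · have hc1 : I.card ≤ (F.incidenceFinset w).card := Finset.card_le_card hIsub
      have hc2 : (F.incidenceFinset w).card = gdeg F w := by
        rw [SimpleGraph.card_incidenceFinset_eq_degree, ← StarAux.gdeg_eq_degree]
      omega
    · -- degree exactly 5: w is covered by the star forest
      have h5' : gdeg F w = 5 := le_antisymm (hdeg w) h5
      obtain ⟨p, hp, hor⟩ := hcov w (Finset.mem_filter.mpr ⟨Finset.mem_univ _, h5'⟩)
      set e1 : Sym2 V := s(p.1, p.2) with he1def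
      have he1mem : e1 ∈ E1fin := Finset.mem_image.mpr ⟨p, hp, rfl⟩
      have he1inc : e1 ∈ F.incidenceFinset w := by
        rw [SimpleGraph.incidenceFinset_eq_filter]
        refine Finset.mem_filter.mpr ⟨hE1sub he1mem, ?_⟩
        rcases hor with h | h
        · rw [← h]; exact Sym2.mem_mk_left _ _
        · rw [← h]; exact Sym2.mem_mk_right _ _
      have hIsub' : I ⊆ (F.incidenceFinset w).erase e1 := by
        intro e he
        refine Finset.mem_erase.mpr ⟨?_, hIsub he⟩
        obtain ⟨e', he', rfl⟩ := Finset.mem_image.mp he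
        intro hcontra
        have : e'.1 ∉ E1fin := (Finset.mem_sdiff.mp e'.2).2
        rw [hcontra] at this
        exact this he1mem
      calc I.card ≤ ((F.incidenceFinset w).erase e1).card := Finset.card_le_card hIsub'
        _ = (F.incidenceFinset w).card - 1 := Finset.card_erase_of_mem he1inc
        _ ≤ 4 := by omega
  -- Hall's condition
  have hall : ∀ s : Finset {e : Sym2 V // e ∈ E2fin}, s.card ≤ (s.biUnion t).card := by
    intro s
    set U : Finset V := s.biUnion (fun e => Finset.univ.filter (fun x => x ∈ e.1)) with hUdef
    have hbi : s.biUnion t = U ×ˢ (Finset.univ : Finset (Fin 2)) := by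
      ext ⟨x, i⟩
      simp only [htdef, hUdef, Finset.mem_biUnion, Finset.mem_product, Finset.mem_filter,
        Finset.mem_univ, true_and, and_true]
    have hswap : ∑ e ∈ s, (Finset.univ.filter (fun x => x ∈ e.1)).card
        = ∑ w ∈ Finset.univ, (s.filter (fun e => w ∈ e.1)).card := by
      simp only [Finset.card_filter]
      exact Finset.sum_comm
    have hlhs : ∑ e ∈ s, (Finset.univ.filter (fun x => x ∈ e.1)).card = 2 * s.card := by
      rw [Finset.sum_congr rfl (fun e _ => hcard2 e), Finset.sum_const, smul_eq_mul,
        Nat.mul_comm]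
    have hzero : ∀ w ∈ Finset.univ, w ∉ U → (s.filter (fun e => w ∈ e.1)).card = 0 := by
      intro w _ hwU
      rw [Finset.card_eq_zero]
      rw [Finset.filter_eq_empty_iff]
      intro e he hcontra
      exact hwU (Finset.mem_biUnion.mpr ⟨e, he, Finset.mem_filter.mpr ⟨Finset.mem_univ _, hcontra⟩⟩)
    have hsum2 : ∑ w ∈ Finset.univ, (s.filter (fun e => w ∈ e.1)).card
        = ∑ w ∈ U, (s.filter (fun e => w ∈ e.1)).card :=
      (Finset.sum_subset (Finset.subset_univ U) hzero).symm
    have hrhs : ∑ w ∈ U, (s.filter (fun e => w ∈ e.1)).card ≤ 4 * U.card := by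
      calc ∑ w ∈ U, (s.filter (fun e => w ∈ e.1)).card ≤ ∑ _w ∈ U, 4 :=
            Finset.sum_le_sum (fun w _ => hbound s w)
        _ = 4 * U.card := by rw [Finset.sum_const, smul_eq_mul, Nat.mul_comm]
    have hkey : 2 * s.card ≤ 4 * U.card := by
      rw [← hlhs, hswap, hsum2]; exact hrhs
    rw [hbi, Finset.card_product]
    simp only [Finset.card_univ, Fintype.card_fin]
    omega
  obtain ⟨f, hfinj, hft⟩ := (Finset.all_card_le_biUnion_card_iff_exists_injective t).mp hall
  have hf1 : ∀ e : {e : Sym2 V // e ∈ E2fin}, (f e).1 ∈ e.1 := by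
    intro e
    have := hft e
    rw [htdef] at this
    exact (Finset.mem_filter.mp (Finset.mem_product.mp this).1).2
  -- the orientation
  set D : Set (V × V) :=
    {p | ∃ h : s(p.1, p.2) ∈ E2fin, (f ⟨s(p.1, p.2), h⟩).1 = p.1} with hDdef
  refine ⟨↑E1fin, ↑E2fin, D, ?_, ?_, ?_, ?_, ?_, ?_⟩
  · -- union
    rw [← Finset.coe_union, hE2def, Finset.union_sdiff_of_subset hE1sub,
      SimpleGraph.coe_edgeFinset]
  · -- disjoint
    rw [hE2def]
    exact Finset.disjoint_coe.mpr Finset.disjoint_sdiff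
  · -- star forest
    intro x y hxy
    rw [SimpleGraph.fromEdgeSet_adj] at hxy
    obtain ⟨hmem, hnexy⟩ := hxy
    obtain ⟨p, hp, heq⟩ := Finset.mem_image.mp (Finset.mem_coe.mp hmem)
    have leafdeg : ∀ q ∈ σ, gdeg (SimpleGraph.fromEdgeSet (↑E1fin : Set (Sym2 V))) q.1 = 1 := by
      intro q hq
      have hset : {z | (SimpleGraph.fromEdgeSet (↑E1fin : Set (Sym2 V))).Adj q.1 z} = {q.2} := by
        ext z
        simp only [Set.mem_setOf_eq, SimpleGraph.fromEdgeSet_adj, Set.mem_singleton_iff,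
          Finset.mem_coe]
        constructor
        · rintro ⟨hz, hnz⟩
          obtain ⟨r, hr, hre⟩ := Finset.mem_image.mp hz
          rcases Sym2.eq_iff.mp hre with ⟨h1, h2⟩ | ⟨h1, h2⟩
          · rw [← h2, hL r hr q hq h1]
          · exact absurd h2.symm (hC q hq r hr)
        · rintro rfl
          exact ⟨Finset.mem_coe.mpr (Finset.mem_image.mpr ⟨q, hq, rfl⟩), (hA q hq).ne⟩
      rw [gdeg, hset, Set.ncard_singleton]
    rcases Sym2.eq_iff.mp heq with ⟨h1, _⟩ | ⟨h1, _⟩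
    · left; rw [← h1]; exact leafdeg p hp
    · right; rw [← h1]; exact leafdeg p hp
  · -- D maps into E2
    rintro p ⟨h, _⟩
    exact Finset.mem_coe.mpr h
  · -- exact orientation
    intro a b hab
    have hab' : s(a, b) ∈ E2fin := Finset.mem_coe.mp hab
    have hne : a ≠ b := by
      have := SimpleGraph.not_isDiag_of_mem_edgeSet F
        (SimpleGraph.mem_edgeFinset.mp (Finset.mem_sdiff.mp hab').1)
      simpa [Sym2.mk_isDiag_iff] using this
    have hba' : s(b, a) ∈ E2fin := by rw [Sym2.eq_swap]; exact hab'
    have hsub : (⟨s(b, a), hba'⟩ : {e : Sym2 V // e ∈ E2fin}) = ⟨s(a, b), hab'⟩ :=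
      Subtype.ext Sym2.eq_swap
    have hx := hf1 ⟨s(a, b), hab'⟩
    rw [Sym2.mem_iff] at hx
    constructor
    · rintro ⟨h1, he1⟩ ⟨h2, he2⟩
      have he1' : (f ⟨s(a, b), hab'⟩).1 = a := he1
      have he2' : (f ⟨s(b, a), hba'⟩).1 = b := he2
      rw [hsub] at he2'
      exact hne (he1'.symm.trans he2')
    · intro hnot
      refine ⟨hab', ?_⟩
      rcases hx with h | h
      · exact h
      · exfalso
        refine hnot ⟨hba', ?_⟩
        show (f ⟨s(b, a), hba'⟩).1 = b
        rw [hsub]; exact h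
  · -- out-degree at most 2
    intro v
    set N : Set V := {u | (v, u) ∈ D} with hNdef
    set g : V → Fin 2 := fun u =>
      if h : s(v, u) ∈ E2fin then (f ⟨s(v, u), h⟩).2 else 0 with hgdef
    have hinj : Set.InjOn g N := by
      rintro u1 ⟨h1, he1⟩ u2 ⟨h2, he2⟩ hg
      have h1' : s(v, u1) ∈ E2fin := h1
      have h2' : s(v, u2) ∈ E2fin := h2
      have he1' : (f ⟨s(v, u1), h1'⟩).1 = v := he1
      have he2' : (f ⟨s(v, u2), h2'⟩).1 = v := he2
      have hg' : (f ⟨s(v, u1), h1'⟩).2 = (f ⟨s(v, u2), h2'⟩).2 := by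
        rw [hgdef] at hg
        simpa only [dif_pos h1', dif_pos h2'] using hg
      have hfeq : f ⟨s(v, u1), h1'⟩ = f ⟨s(v, u2), h2'⟩ :=
        Prod.ext (he1'.trans he2'.symm) hg'
      have := hfinj hfeq
      have hvs : s(v, u1) = s(v, u2) := congrArg Subtype.val this
      rcases Sym2.eq_iff.mp hvs with ⟨_, h⟩ | ⟨hva, hbv⟩
      · exact h
      · rw [hbv]; exact hva
    calc N.ncard = (g '' N).ncard := (Set.ncard_image_of_injOn hinj).symm
      _ ≤ (Set.univ : Set (Fin 2)).ncard :=
          Set.ncard_le_ncard (Set.subset_univ _) (Set.toFinite _)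
      _ = 2 := by rw [Set.ncard_univ, Nat.card_eq_fintype_card, Fintype.card_fin]
end
end

section
/- Let M be a maximum-cardinality matching of a finite simple graph F = (V, E), let U be a set of vertices of F not covered by M, and for each v ∈ U let e_v be an edge of F incident to v. Then the graph (V, M ∪ {e_v : v ∈ U}) is a disjoint union of stars. -/
open SimpleGraph

noncomputable section

/-- A matching of `F`, given as a set of pairwise disjoint edges of `F`. -/
def IsMatchingIn {V : Type*} (F : SimpleGraph V) (M : Set (Sym2 V)) : Prop :=
  M ⊆ F.edgeSet ∧ ∀ e ∈ M, ∀ f ∈ M, e ≠ f → ∀ v : V, v ∈ e → v ∉ f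

/-- A vertex is covered by a set of edges if it is an endpoint of one of them. -/
def CoveredBy {V : Type*} (M : Set (Sym2 V)) (v : V) : Prop := ∃ e ∈ M, v ∈ e

/-!
In a maximum matching no edge of `F` joins two uncovered vertices, so the far endpoint of
each `e v` is covered and every `v ∈ U` is a leaf of the new graph. An edge `uv ∈ M` whose
endpoints both have a second neighbour `x` and `y` would give, since `x` and `y` are then
leaves attached to `u` and to `v`, an augmenting path `x u v y`.
-/

section Matchings

variable {V : Type*} {F : SimpleGraph V} {M N : Set (Sym2 V)} {f : Sym2 V} {u v x y : V}
  {U : Set V} {e : V → Sym2 V}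

theorem coveredBy_insert : CoveredBy (insert f M) v ↔ v ∈ f ∨ CoveredBy M v := by
  simp [CoveredBy]

theorem CoveredBy.mono (h : CoveredBy N v) (hNM : N ⊆ M) : CoveredBy M v :=
  let ⟨f, hf, hv⟩ := h
  ⟨f, hNM hf, hv⟩

theorem IsMatchingIn.mono (hM : IsMatchingIn F M) (hNM : N ⊆ M) : IsMatchingIn F N :=
  ⟨hNM.trans hM.1, fun f hf g hg => hM.2 f (hNM hf) g (hNM hg)⟩

theorem IsMatchingIn.insert (hM : IsMatchingIn F M) (hf : f ∈ F.edgeSet)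
    (hfree : ∀ v ∈ f, ¬CoveredBy M v) : IsMatchingIn F (insert f M) := by
  refine ⟨Set.insert_subset hf hM.1, ?_⟩
  rintro g (rfl | hg) h (rfl | hh) hgh v hvg hvh
  · exact hgh rfl
  · exact hfree v hvg ⟨h, hh, hvh⟩
  · exact hfree v hvh ⟨g, hg, hvg⟩
  · exact hM.2 g hg h hh hgh v hvg hvh

theorem IsMatchingIn.not_coveredBy_diff_singleton (hM : IsMatchingIn F M) (hf : f ∈ M)
    (hv : v ∈ f) : ¬CoveredBy (M \ {f}) v := by
  rintro ⟨g, ⟨hg, hgf⟩, hvg⟩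
  exact hM.2 f hf g hg (Ne.symm hgf) v hv hvg

def IsMaximumMatchingIn (F : SimpleGraph V) (M : Set (Sym2 V)) : Prop :=
  IsMatchingIn F M ∧ ∀ M' : Set (Sym2 V), IsMatchingIn F M' → M'.ncard ≤ M.ncard

namespace IsMaximumMatchingIn

-- Infinite sets have `ncard = 0`, which a single edge of `M` would beat.
theorem finite (hM : IsMaximumMatchingIn F M) : M.Finite := by
  by_contra hinf
  obtain ⟨f, hf⟩ := Set.Infinite.nonempty hinf
  have h := hM.2 {f} (hM.1.mono (Set.singleton_subset_iff.2 hf))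
  rw [Set.ncard_singleton, Set.Infinite.ncard hinf] at h
  omega

theorem ncard_lt_of_insert (hM : IsMaximumMatchingIn F M) (hN : IsMatchingIn F N)
    (hfin : N.Finite) (hf : f ∈ F.edgeSet) (hfree : ∀ v ∈ f, ¬CoveredBy N v) :
    N.ncard < M.ncard := by
  have hfN : f ∉ N := by
    induction f using Sym2.ind with
    | h a b => exact fun h => hfree a (Sym2.mem_mk_left a b) ⟨_, h, Sym2.mem_mk_left a b⟩
  have h := hM.2 _ (hN.insert hf hfree)
  rw [Set.ncard_insert_of_notMem hfN hfin] at h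
  omega

theorem coveredBy_of_adj (hM : IsMaximumMatchingIn F M) (hab : F.Adj u v)
    (hu : ¬CoveredBy M u) : CoveredBy M v := by
  by_contra hv
  have hfree : ∀ w ∈ s(u, v), ¬CoveredBy M w := by
    simp only [Sym2.mem_iff]
    rintro w (rfl | rfl) <;> assumption
  exact lt_irrefl _ (hM.ncard_lt_of_insert hM.1 hM.finite hab hfree)

-- For `x ≠ y`, `x u v y` would be an augmenting path.
theorem eq_of_adj_of_adj (hM : IsMaximumMatchingIn F M) (huv : s(u, v) ∈ M)
    (hux : F.Adj u x) (hvy : F.Adj v y) (hx : ¬CoveredBy M x) (hy : ¬CoveredBy M y) :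
    x = y := by
  by_contra hxy
  set N := M \ {s(u, v)}
  have hN : IsMatchingIn F N := hM.1.mono Set.sdiff_subset
  have hfin : N.Finite := hM.finite.subset Set.sdiff_subset
  have hNu : ¬CoveredBy N u := hM.1.not_coveredBy_diff_singleton huv (Sym2.mem_mk_left u v)
  have hNv : ¬CoveredBy N v := hM.1.not_coveredBy_diff_singleton huv (Sym2.mem_mk_right u v)
  have hNx : ¬CoveredBy N x := fun h => hx (h.mono Set.sdiff_subset)
  have hNy : ¬CoveredBy N y := fun h => hy (h.mono Set.sdiff_subset)
  have hu : CoveredBy M u := ⟨_, huv, Sym2.mem_mk_left u v⟩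
  have hv : CoveredBy M v := ⟨_, huv, Sym2.mem_mk_right u v⟩
  have hvy_free : ∀ w ∈ s(v, y), ¬CoveredBy N w := by
    simp only [Sym2.mem_iff]
    rintro w (rfl | rfl) <;> assumption
  have hux_free : ∀ w ∈ s(u, x), ¬CoveredBy (insert s(v, y) N) w := by
    simp only [Sym2.mem_iff, coveredBy_insert, not_or]
    rintro w (rfl | rfl)
    · exact ⟨⟨(hM.1.1 huv).ne, fun h => hy (h ▸ hu)⟩, hNu⟩
    · exact ⟨⟨fun h => hx (h ▸ hv), hxy⟩, hNx⟩
  have h := hM.ncard_lt_of_insert (hN.insert hvy hvy_free) (hfin.insert _) hux hux_free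
  rw [Set.ncard_insert_of_notMem (fun h => hNy ⟨_, h, Sym2.mem_mk_right v y⟩) hfin,
    Set.ncard_sdiff_singleton_add_one huv hM.finite] at h
  exact lt_irrefl _ h

end IsMaximumMatchingIn

theorem gdeg_eq_one_of_adj {G : SimpleGraph V} (huv : G.Adj u v)
    (huniq : ∀ x, G.Adj u x → x = v) : gdeg G u = 1 :=
  Set.ncard_eq_one.2 ⟨v, Set.ext fun x => ⟨huniq x, fun hx => hx ▸ huv⟩⟩

theorem adj_fromEdgeSet_cases (he : ∀ v ∈ U, v ∈ e v)
    (hux : (fromEdgeSet (M ∪ e '' U)).Adj u x) :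
    s(u, x) ∈ M ∨ (u ∈ U ∧ e u = s(u, x)) ∨ (x ∈ U ∧ e x = s(u, x)) := by
  obtain ⟨hM | ⟨z, hz, hzux⟩, -⟩ := (fromEdgeSet_adj _).1 hux
  · exact Or.inl hM
  · have hzmem := he z hz
    rw [hzux, Sym2.mem_iff] at hzmem
    rcases hzmem with rfl | rfl
    · exact Or.inr (Or.inl ⟨hz, hzux⟩)
    · exact Or.inr (Or.inr ⟨hz, hzux⟩)

theorem gdeg_fromEdgeSet_eq_one_of_mem (hM : IsMaximumMatchingIn F M)
    (hU : ∀ v ∈ U, ¬CoveredBy M v) (he : ∀ v ∈ U, e v ∈ F.edgeSet ∧ v ∈ e v)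
    (hu : u ∈ U) (huv : (fromEdgeSet (M ∪ e '' U)).Adj u v) :
    gdeg (fromEdgeSet (M ∪ e '' U)) u = 1 := by
  have hleaf : ∀ x, (fromEdgeSet (M ∪ e '' U)).Adj u x → e u = s(u, x) := by
    intro x hux
    rcases adj_fromEdgeSet_cases (fun v hv => (he v hv).2) hux with hM' | ⟨-, hex⟩ | ⟨hx, hex⟩
    · exact absurd ⟨_, hM', Sym2.mem_mk_left u x⟩ (hU u hu)
    · exact hex
    · have hFux : F.Adj u x := F.mem_edgeSet.1 (hex ▸ (he x hx).1)
      exact absurd (hM.coveredBy_of_adj hFux.symm (hU x hx)) (hU u hu)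
  exact gdeg_eq_one_of_adj huv fun x hux =>
    Sym2.congr_right.1 ((hleaf x hux).symm.trans (hleaf v huv))

theorem mem_and_eq_of_adj_fromEdgeSet (hM : IsMatchingIn F M) (hU : ∀ v ∈ U, ¬CoveredBy M v)
    (he : ∀ v ∈ U, v ∈ e v) (huv : s(u, v) ∈ M) (hux : (fromEdgeSet (M ∪ e '' U)).Adj u x)
    (hxv : x ≠ v) : x ∈ U ∧ e x = s(u, x) := by
  rcases adj_fromEdgeSet_cases he hux with hM' | ⟨hu, -⟩ | h
  · exact absurd (Sym2.mem_mk_left u x) (hM.2 _ huv _ hM'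
      (fun h => hxv (Sym2.congr_right.1 h).symm) u (Sym2.mem_mk_left u v))
  · exact absurd ⟨_, huv, Sym2.mem_mk_left u v⟩ (hU u hu)
  · exact h

theorem gdeg_fromEdgeSet_eq_one_or_of_mem_matching (hM : IsMaximumMatchingIn F M)
    (hU : ∀ v ∈ U, ¬CoveredBy M v) (he : ∀ v ∈ U, e v ∈ F.edgeSet ∧ v ∈ e v)
    (huv : s(u, v) ∈ M) :
    gdeg (fromEdgeSet (M ∪ e '' U)) u = 1 ∨ gdeg (fromEdgeSet (M ∪ e '' U)) v = 1 := by
  have hFuv : F.Adj u v := hM.1.1 huv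
  have hGuv : (fromEdgeSet (M ∪ e '' U)).Adj u v := (fromEdgeSet_adj _).2 ⟨Or.inl huv, hFuv.ne⟩
  have he' : ∀ v ∈ U, v ∈ e v := fun v hv => (he v hv).2
  by_contra! hdeg
  obtain ⟨x, hux, hxv⟩ : ∃ x, (fromEdgeSet (M ∪ e '' U)).Adj u x ∧ x ≠ v := by
    by_contra! h
    exact hdeg.1 (gdeg_eq_one_of_adj hGuv h)
  obtain ⟨y, hvy, hyu⟩ : ∃ y, (fromEdgeSet (M ∪ e '' U)).Adj v y ∧ y ≠ u := by
    by_contra! h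
    exact hdeg.2 (gdeg_eq_one_of_adj hGuv.symm h)
  obtain ⟨hx, hex⟩ := mem_and_eq_of_adj_fromEdgeSet hM.1 hU he' huv hux hxv
  obtain ⟨hy, hey⟩ :=
    mem_and_eq_of_adj_fromEdgeSet hM.1 hU he' (Sym2.eq_swap ▸ huv) hvy hyu
  have hFux : F.Adj u x := F.mem_edgeSet.1 (hex ▸ (he x hx).1)
  have hFvy : F.Adj v y := F.mem_edgeSet.1 (hey ▸ (he y hy).1)
  obtain rfl := hM.eq_of_adj_of_adj huv hFux hFvy (hU x hx) (hU y hy)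
  exact hFuv.ne (Sym2.congr_left.1 (hex.symm.trans hey))

end Matchings

theorem stmt_2_general {V : Type*} (F : SimpleGraph V) (M : Set (Sym2 V))
    (hM : IsMatchingIn F M)
    (hmax : ∀ M' : Set (Sym2 V), IsMatchingIn F M' → M'.ncard ≤ M.ncard)
    (U : Set V) (hU : ∀ v ∈ U, ¬ CoveredBy M v)
    (e : V → Sym2 V) (he : ∀ v ∈ U, e v ∈ F.edgeSet ∧ v ∈ e v) :
    IsStarForest (SimpleGraph.fromEdgeSet (M ∪ e '' U)) := by
  have hmaximum : IsMaximumMatchingIn F M := ⟨hM, hmax⟩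
  intro u v huv
  rcases adj_fromEdgeSet_cases (fun v hv => (he v hv).2) huv with huvM | ⟨hu, -⟩ | ⟨hv, -⟩
  · exact gdeg_fromEdgeSet_eq_one_or_of_mem_matching hmaximum hU he huvM
  · exact Or.inl (gdeg_fromEdgeSet_eq_one_of_mem hmaximum hU he hu huv)
  · exact Or.inr (gdeg_fromEdgeSet_eq_one_of_mem hmaximum hU he hv huv.symm)

/-- if `M` is a maximum-cardinality matching of `F`, `U` is a set of vertices
not covered by `M`, and each `v ∈ U` is given an incident edge `e v` of `F`, then the graph
with edge set `M ∪ {e v : v ∈ U}` is a disjoint union of stars. -/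
theorem stmt_2 {V : Type*} [Fintype V] (F : SimpleGraph V) (M : Set (Sym2 V))
    (hM : IsMatchingIn F M)
    (hmax : ∀ M' : Set (Sym2 V), IsMatchingIn F M' → M'.ncard ≤ M.ncard)
    (U : Set V) (hU : ∀ v ∈ U, ¬ CoveredBy M v)
    (e : V → Sym2 V) (he : ∀ v ∈ U, e v ∈ F.edgeSet ∧ v ∈ e v) :
    IsStarForest (SimpleGraph.fromEdgeSet (M ∪ e '' U)) :=
  stmt_2_general F M hM hmax U hU e he
end
end

section
/- For every integer p ≥ 2, the XOR gadget of order p has exactly two subtours, namely: T_a, whose edge set consists of all 2p edges a_i u_i and u_i b_i (1 ≤ i ≤ p) together with the edges a_i a_{i+1} for all odd i with 1 ≤ i ≤ p−1 and the edges b_i b_{i+1} for all even i with 1 ≤ i ≤ p−1; and T_b, whose edge set consists of all 2p edges a_i u_i and u_i b_i together with the edges a_i a_{i+1} for all even i with 1 ≤ i ≤ p−1 and the edges b_i b_{i+1} for all odd i with 1 ≤ i ≤ p−1. For p = 1, the XOR gadget of order 1 has exactly one subtour, namely the path (a_1, u_1, b_1). -/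
/-!
In a subtour every `uᵢ` is an interior vertex, so both rung edges `aᵢuᵢ` and `uᵢbᵢ` are used.
Only the two rails between levels `i` and `i + 1` cross the cut there, so connectivity forces
one of them, and acyclicity (the cycle `aᵢ uᵢ bᵢ bᵢ₊₁ uᵢ₊₁ aᵢ₊₁`) forbids both. Since `aᵢ₊₁` and
`bᵢ₊₁` already carry a rung edge, degree at most two forbids the same rail on two consecutive
levels; hence the rails alternate and the first one decides between `T_a` and `T_b`.
Conversely, listing the vertices of `T_a` or `T_b` in path order identifies each of them with
the path graph on `3p` vertices.
-/

open SimpleGraph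

noncomputable section

/-- The vertex type of the XOR gadget of order `p`: `(0, i)` is `aᵢ₊₁`, `(1, i)` is `bᵢ₊₁`,
and `(2, i)` is `uᵢ₊₁` (0-based indices). -/
abbrev XV (p : ℕ) := Fin 3 × Fin p

def av {p : ℕ} (i : Fin p) : XV p := ((0 : Fin 3), i)
def bv {p : ℕ} (i : Fin p) : XV p := ((1 : Fin 3), i)
def uvx {p : ℕ} (i : Fin p) : XV p := ((2 : Fin 3), i)

/-- The edges of the XOR gadget of order `p`: the rail edges `aᵢaᵢ₊₁`, `bᵢbᵢ₊₁`, and the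
subdivided rungs `aᵢuᵢ`, `uᵢbᵢ`. -/
def xorEdges (p : ℕ) : Set (Sym2 (XV p)) :=
  {e | (∃ i j : Fin p, (j : ℕ) = (i : ℕ) + 1 ∧ (e = s(av i, av j) ∨ e = s(bv i, bv j))) ∨
       (∃ i : Fin p, e = s(av i, uvx i) ∨ e = s(bv i, uvx i))}

/-- The XOR gadget of order `p`. -/
def xorGadget (p : ℕ) : SimpleGraph (XV p) := SimpleGraph.fromEdgeSet (xorEdges p)

/-- The set `{a₁, a_p, b₁, b_p}` of allowed endpoints. -/
def xorEnds (p : ℕ) : Set (XV p) :=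
  {v | (v.1 = 0 ∨ v.1 = 1) ∧ ((v.2 : ℕ) = 0 ∨ (v.2 : ℕ) = p - 1)}

/-- A subtour of the XOR gadget of order `p`: a Hamiltonian path (connected, acyclic,
all degrees 1 or 2) whose endpoints (the degree-one vertices) lie in `{a₁, a_p, b₁, b_p}`,
given by its edge set `T`. -/
def IsXorSubtour (p : ℕ) (T : Set (Sym2 (XV p))) : Prop :=
  T ⊆ (xorGadget p).edgeSet ∧
  (SimpleGraph.fromEdgeSet T).Connected ∧
  (SimpleGraph.fromEdgeSet T).IsAcyclic ∧
  (∀ v : XV p, gdeg (SimpleGraph.fromEdgeSet T) v = 1 ∨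
      gdeg (SimpleGraph.fromEdgeSet T) v = 2) ∧
  (∀ v : XV p, gdeg (SimpleGraph.fromEdgeSet T) v = 1 → v ∈ xorEnds p)

/-- The subtour `T_a`: all rungs, together with `aᵢaᵢ₊₁` for odd `i` (1-based, i.e. even
0-based index) and `bᵢbᵢ₊₁` for even `i` (1-based, i.e. odd 0-based index). -/
def Ta (p : ℕ) : Set (Sym2 (XV p)) :=
  {e | (∃ i : Fin p, e = s(av i, uvx i) ∨ e = s(bv i, uvx i)) ∨
       (∃ i j : Fin p, (j : ℕ) = (i : ℕ) + 1 ∧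
          (((i : ℕ) % 2 = 0 ∧ e = s(av i, av j)) ∨ ((i : ℕ) % 2 = 1 ∧ e = s(bv i, bv j))))}

/-- The subtour `T_b`: all rungs, together with `aᵢaᵢ₊₁` for even `i` (1-based) and
`bᵢbᵢ₊₁` for odd `i` (1-based). -/
def Tb (p : ℕ) : Set (Sym2 (XV p)) :=
  {e | (∃ i : Fin p, e = s(av i, uvx i) ∨ e = s(bv i, uvx i)) ∨
       (∃ i j : Fin p, (j : ℕ) = (i : ℕ) + 1 ∧
          (((i : ℕ) % 2 = 1 ∧ e = s(av i, av j)) ∨ ((i : ℕ) % 2 = 0 ∧ e = s(bv i, bv j))))}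

namespace SimpleGraph

lemma Iso.gdeg_eq {V W : Type*} {G : SimpleGraph V} {H : SimpleGraph W} (e : G ≃g H) (v : V) :
    gdeg H (e v) = gdeg G v := by
  have : {w | H.Adj (e v) w} = e '' {u | G.Adj v u} := by
    ext w
    obtain ⟨u, rfl⟩ := e.surjective w
    simp [e.injective.mem_set_image, e.map_adj_iff]
  rw [gdeg, gdeg, this, Set.ncard_image_of_injective _ e.injective]

lemma isAcyclic_pathGraph (n : ℕ) : (pathGraph n).IsAcyclic := by
  refine isAcyclic_iff_forall_adj_isBridge.mpr fun u v huv => ?_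
  wlog h : (u : ℕ) + 1 = v generalizing u v
  · exact Sym2.eq_swap ▸ this v u huv.symm ((pathGraph_adj.mp huv).resolve_left h)
  rw [isBridge_iff]
  rintro ⟨w⟩
  have hv : v ∉ Set.Iic u := by rw [Set.mem_Iic, Fin.le_def]; omega
  obtain ⟨d, -, hd₁, hd₂⟩ := w.exists_boundary_dart (Set.Iic u) (Set.mem_Iic.mpr le_rfl) hv
  obtain ⟨hadj, hne⟩ := deleteEdges_adj.mp d.adj
  simp only [Set.mem_Iic, Fin.le_def, not_le] at hd₁ hd₂
  apply hne
  have h₁ : d.fst = u := by rw [pathGraph_adj] at hadj; ext; omega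
  have h₂ : d.snd = v := by rw [pathGraph_adj] at hadj; ext; omega
  simp [h₁, h₂]

lemma gdeg_pathGraph_le_two {n : ℕ} (k : Fin n) : gdeg (pathGraph n) k ≤ 2 :=
  calc gdeg (pathGraph n) k ≤ ({(k : ℕ) - 1, (k : ℕ) + 1} : Set ℕ).ncard :=
        Set.ncard_le_ncard_of_injOn Fin.val
          (fun j hj => by simp only [Set.mem_ofPred_eq, pathGraph_adj] at hj; simp; omega)
          Fin.val_injective.injOn (Set.toFinite _)
    _ ≤ 2 := (Set.ncard_insert_le _ _).trans (by simp)

lemma gdeg_pathGraph_pos {n : ℕ} (hn : 2 ≤ n) (k : Fin n) : 0 < gdeg (pathGraph n) k := by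
  refine (Set.ncard_pos (Set.toFinite _)).mpr ?_
  by_cases hk : (k : ℕ) + 1 < n
  · exact ⟨⟨k + 1, hk⟩, pathGraph_adj.mpr (Or.inl rfl)⟩
  · exact ⟨⟨k - 1, by omega⟩, pathGraph_adj.mpr (Or.inr (by simp; omega))⟩

lemma gdeg_pathGraph_of_pos_of_lt {n : ℕ} {k : Fin n} (h₀ : 0 < (k : ℕ)) (h₁ : (k : ℕ) + 1 < n) :
    gdeg (pathGraph n) k = 2 := by
  refine le_antisymm (gdeg_pathGraph_le_two k) ?_
  have hsub : ({⟨k - 1, by omega⟩, ⟨k + 1, h₁⟩} : Set (Fin n)) ⊆ {j | (pathGraph n).Adj k j} := by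
    rintro j (rfl | rfl) <;> simp [pathGraph_adj]; omega
  calc 2 = ({⟨k - 1, by omega⟩, ⟨k + 1, h₁⟩} : Set (Fin n)).ncard :=
        (Set.ncard_pair (by simp [Fin.ext_iff])).symm
    _ ≤ gdeg (pathGraph n) k := Set.ncard_le_ncard hsub (Set.toFinite _)

lemma three_le_gdeg {V : Type*} [Finite V] {G : SimpleGraph V} {v x y z : V}
    (hx : G.Adj v x) (hy : G.Adj v y) (hz : G.Adj v z) (hxy : x ≠ y) (hxz : x ≠ z)
    (hyz : y ≠ z) : 3 ≤ gdeg G v := by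
  have hsub : ({x, y, z} : Set V) ⊆ {u | G.Adj v u} := by
    rintro u (rfl | rfl | rfl) <;> assumption
  calc 3 = ({x, y, z} : Set V).ncard := (Set.ncard_eq_three.mpr ⟨x, y, z, hxy, hxz, hyz, rfl⟩).symm
    _ ≤ gdeg G v := Set.ncard_le_ncard hsub (Set.toFinite _)

end SimpleGraph

variable {p : ℕ}

@[simp] lemma av_ne_bv {i j : Fin p} : av i ≠ bv j := by simp [av, bv]
@[simp] lemma av_ne_uvx {i j : Fin p} : av i ≠ uvx j := by simp [av, uvx]
@[simp] lemma bv_ne_uvx {i j : Fin p} : bv i ≠ uvx j := by simp [bv, uvx]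

lemma exists_eq_av_or_bv_or_uvx (v : XV p) : ∃ i, v = av i ∨ v = bv i ∨ v = uvx i := by
  obtain ⟨t, i⟩ := v
  fin_cases t
  exacts [⟨i, Or.inl rfl⟩, ⟨i, Or.inr (Or.inl rfl)⟩, ⟨i, Or.inr (Or.inr rfl)⟩]

/-- `Tgen 0 p` is `Ta p` and `Tgen 1 p` is `Tb p`, definitionally. -/
def Tgen (c p : ℕ) : Set (Sym2 (XV p)) :=
  {e | (∃ i : Fin p, e = s(av i, uvx i) ∨ e = s(bv i, uvx i)) ∨
       (∃ i j : Fin p, (j : ℕ) = (i : ℕ) + 1 ∧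
          (((i : ℕ) % 2 = c ∧ e = s(av i, av j)) ∨ ((i : ℕ) % 2 = 1 - c ∧ e = s(bv i, bv j))))}

lemma rung_a_mem_tgen (c : ℕ) (i : Fin p) : s(av i, uvx i) ∈ Tgen c p := Or.inl ⟨i, Or.inl rfl⟩
lemma rung_b_mem_tgen (c : ℕ) (i : Fin p) : s(bv i, uvx i) ∈ Tgen c p := Or.inl ⟨i, Or.inr rfl⟩

lemma rail_a_mem_tgen {c : ℕ} {i j : Fin p} (hij : (j : ℕ) = (i : ℕ) + 1) (h : (i : ℕ) % 2 = c) :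
    s(av i, av j) ∈ Tgen c p := Or.inr ⟨i, j, hij, Or.inl ⟨h, rfl⟩⟩
lemma rail_b_mem_tgen {c : ℕ} {i j : Fin p} (hij : (j : ℕ) = (i : ℕ) + 1)
    (h : (i : ℕ) % 2 = 1 - c) : s(bv i, bv j) ∈ Tgen c p := Or.inr ⟨i, j, hij, Or.inr ⟨h, rfl⟩⟩

lemma tgen_subset_edgeSet (c : ℕ) : Tgen c p ⊆ (xorGadget p).edgeSet := by
  rw [xorGadget, edgeSet_fromEdgeSet]
  rintro e (⟨i, rfl | rfl⟩ | ⟨i, j, hij, ⟨-, rfl⟩ | ⟨-, rfl⟩⟩)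
  · exact ⟨Or.inr ⟨i, Or.inl rfl⟩, by simp⟩
  · exact ⟨Or.inr ⟨i, Or.inr rfl⟩, by simp⟩
  · exact ⟨Or.inl ⟨i, j, hij, Or.inl rfl⟩, by simp [av, Fin.ext_iff]; omega⟩
  · exact ⟨Or.inl ⟨i, j, hij, Or.inr rfl⟩, by simp [bv, Fin.ext_iff]; omega⟩

/-- The position of a vertex along the path `Tgen c p`, which runs through the `i`-th rung as
`bᵢ uᵢ aᵢ` when `i ≡ c (mod 2)` and as `aᵢ uᵢ bᵢ` otherwise. -/
def pathPos (c : ℕ) (v : XV p) : ℕ :=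
  3 * (v.2 : ℕ) +
    (if v.1 = 2 then 1 else if (v.1 = 0 ↔ (v.2 : ℕ) % 2 = c) then 2 else 0)

lemma pathPos_av (c : ℕ) (i : Fin p) :
    pathPos c (av i) = 3 * (i : ℕ) + (if (i : ℕ) % 2 = c then 2 else 0) := by
  simp [pathPos, av]

lemma pathPos_bv (c : ℕ) (i : Fin p) :
    pathPos c (bv i) = 3 * (i : ℕ) + (if (i : ℕ) % 2 = c then 0 else 2) := by
  by_cases h : (i : ℕ) % 2 = c <;> simp [pathPos, bv, h]

lemma pathPos_uvx (c : ℕ) (i : Fin p) : pathPos c (uvx i) = 3 * (i : ℕ) + 1 := by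
  simp [pathPos, uvx]

lemma pathPos_lt (c : ℕ) (v : XV p) : pathPos c v < 3 * p := by
  obtain ⟨i, rfl | rfl | rfl⟩ := exists_eq_av_or_bv_or_uvx v <;>
    simp only [pathPos_av, pathPos_bv, pathPos_uvx] <;> (try split_ifs) <;> omega

lemma pathPos_injective (c : ℕ) : Function.Injective (pathPos c (p := p)) := by
  intro v w h
  obtain ⟨i, rfl | rfl | rfl⟩ := exists_eq_av_or_bv_or_uvx v <;>
  obtain ⟨j, rfl | rfl | rfl⟩ := exists_eq_av_or_bv_or_uvx w <;>
    simp only [pathPos_av, pathPos_bv, pathPos_uvx] at h <;>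
    (try split_ifs at h) <;> first | omega | (congr 1; ext; omega)

lemma pathPos_adj {c : ℕ} (hc : c < 2) {v w : XV p} (h : (fromEdgeSet (Tgen c p)).Adj v w) :
    pathPos c v + 1 = pathPos c w ∨ pathPos c w + 1 = pathPos c v := by
  obtain ⟨he, -⟩ := fromEdgeSet_adj _ |>.mp h
  rcases he with ⟨i, he | he⟩ | ⟨i, j, hij, ⟨hpar, he⟩ | ⟨hpar, he⟩⟩ <;>
    rcases Sym2.eq_iff.mp he with ⟨rfl, rfl⟩ | ⟨rfl, rfl⟩ <;>
    simp only [pathPos_av, pathPos_bv, pathPos_uvx] <;> split_ifs <;> omega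

lemma exists_mem_tgen_of_pathPos_pos {c : ℕ} (hc : c < 2) {v : XV p} (hv : 0 < pathPos c v) :
    ∃ w, s(w, v) ∈ Tgen c p ∧ pathPos c w + 1 = pathPos c v := by
  obtain ⟨i, rfl | rfl | rfl⟩ := exists_eq_av_or_bv_or_uvx v <;> by_cases hm : (i : ℕ) % 2 = c
  · exact ⟨uvx i, Sym2.eq_swap ▸ rung_a_mem_tgen c i, by simp [pathPos_av, pathPos_uvx, hm]⟩
  · rw [pathPos_av, if_neg hm] at hv
    refine ⟨av ⟨i - 1, by omega⟩, rail_a_mem_tgen (by simp; omega) (by simp; omega), ?_⟩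
    rw [pathPos_av, pathPos_av, if_neg hm, if_pos (by simp; omega)]
    simp; omega
  · rw [pathPos_bv, if_pos hm] at hv
    refine ⟨bv ⟨i - 1, by omega⟩, rail_b_mem_tgen (by simp; omega) (by simp; omega), ?_⟩
    rw [pathPos_bv, pathPos_bv, if_pos hm, if_neg (by simp; omega)]
    simp; omega
  · exact ⟨uvx i, Sym2.eq_swap ▸ rung_b_mem_tgen c i, by simp [pathPos_bv, pathPos_uvx, hm]⟩
  · exact ⟨bv i, rung_b_mem_tgen c i, by simp [pathPos_bv, pathPos_uvx, hm]⟩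
  · exact ⟨av i, rung_a_mem_tgen c i, by simp [pathPos_av, pathPos_uvx, hm]⟩

lemma tgen_adj_iff {c : ℕ} (hc : c < 2) {v w : XV p} :
    (fromEdgeSet (Tgen c p)).Adj v w ↔
      pathPos c v + 1 = pathPos c w ∨ pathPos c w + 1 = pathPos c v := by
  refine ⟨pathPos_adj hc, ?_⟩
  suffices h : ∀ v w, pathPos c w + 1 = pathPos c v → (fromEdgeSet (Tgen c p)).Adj w v by
    rintro (hvw | hwv)
    exacts [h w v hvw, (h v w hwv).symm]
  intro v w hwv
  obtain ⟨w', hw', hpos⟩ := exists_mem_tgen_of_pathPos_pos hc (v := v) (by omega)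
  obtain rfl : w' = w := pathPos_injective c (by omega)
  exact (fromEdgeSet_adj _).mpr ⟨hw', by rintro rfl; omega⟩

def tgenIsoPathGraph {c : ℕ} (hc : c < 2) : fromEdgeSet (Tgen c p) ≃g pathGraph (3 * p) where
  toEquiv := Equiv.ofBijective (fun v => ⟨pathPos c v, pathPos_lt c v⟩)
    ((Fintype.bijective_iff_injective_and_card _).mpr
      ⟨fun v w h => pathPos_injective c (Fin.mk.inj_iff.mp h), by simp⟩)
  map_rel_iff' := by
    intro v w
    simp only [Equiv.ofBijective_apply, pathGraph_adj, tgen_adj_iff hc]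

lemma pathPos_interior_of_notMem_xorEnds (c : ℕ) {v : XV p} (hv : v ∉ xorEnds p) :
    0 < pathPos c v ∧ pathPos c v + 1 < 3 * p := by
  obtain ⟨i, rfl | rfl | rfl⟩ := exists_eq_av_or_bv_or_uvx v <;> have := i.isLt
  · have : ¬((i : ℕ) = 0 ∨ (i : ℕ) = p - 1) := fun h => hv ⟨Or.inl rfl, h⟩
    rw [pathPos_av]; split_ifs <;> omega
  · have : ¬((i : ℕ) = 0 ∨ (i : ℕ) = p - 1) := fun h => hv ⟨Or.inr rfl, h⟩
    rw [pathPos_bv]; split_ifs <;> omega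
  · rw [pathPos_uvx]; omega

lemma tgen_isXorSubtour {c : ℕ} (hc : c < 2) (hp : 0 < p) : IsXorSubtour p (Tgen c p) := by
  set e := tgenIsoPathGraph hc (p := p)
  refine ⟨tgen_subset_edgeSet c, ?_, e.isAcyclic_iff.mpr (isAcyclic_pathGraph _),
    fun v => ?_, fun v hv => ?_⟩
  · obtain ⟨m, hm⟩ : ∃ m, 3 * p = m + 1 := ⟨3 * p - 1, by omega⟩
    rw [e.connected_iff, hm]
    exact pathGraph_connected m
  · rw [← e.gdeg_eq]
    have := gdeg_pathGraph_le_two (e v)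
    have := gdeg_pathGraph_pos (by omega) (e v)
    omega
  · by_contra hend
    obtain ⟨h₀, h₁⟩ := pathPos_interior_of_notMem_xorEnds c hend
    rw [← e.gdeg_eq, gdeg_pathGraph_of_pos_of_lt (k := e v) h₀ h₁] at hv
    omega

lemma uvx_notMem_xorEnds (i : Fin p) : uvx i ∉ xorEnds p := by
  rintro ⟨h | h, -⟩ <;> simp [uvx] at h

lemma eq_av_or_bv_of_mem_xorEdges {i : Fin p} {w : XV p} (h : s(uvx i, w) ∈ xorEdges p) :
    w = av i ∨ w = bv i := by
  rcases h with ⟨i', j', -, h | h⟩ | ⟨i', h | h⟩ <;>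
    simp [av, bv, uvx, Prod.ext_iff] at h <;> simp [av, bv, Prod.ext_iff, h]

lemma eq_of_mem_xorEdges_of_le_of_lt {x y : XV p} {n : ℕ} (h : s(x, y) ∈ xorEdges p)
    (hx : (x.2 : ℕ) ≤ n) (hy : n < y.2) :
    x.1 = y.1 ∧ x.1 ≠ 2 ∧ (x.2 : ℕ) = n ∧ (y.2 : ℕ) = n + 1 := by
  rcases h with ⟨i, j, hij, h | h⟩ | ⟨i, h | h⟩ <;>
    rcases Sym2.eq_iff.mp h with ⟨rfl, rfl⟩ | ⟨rfl, rfl⟩ <;>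
    simp only [av, bv, uvx] at hx hy ⊢ <;> simp <;> omega

def RailAt (T : Set (Sym2 (XV p))) (t : Fin 3) (n : ℕ) : Prop :=
  ∃ h : n + 1 < p, s((t, ⟨n, by omega⟩), (t, ⟨n + 1, h⟩)) ∈ T

lemma railAt_iff {T : Set (Sym2 (XV p))} {t : Fin 3} {i j : Fin p} (hij : (j : ℕ) = i + 1) :
    RailAt T t i ↔ s((t, i), (t, j)) ∈ T := by
  obtain ⟨j, hj⟩ := j
  obtain rfl : j = i + 1 := hij
  exact ⟨fun ⟨_, h⟩ => h, fun h => ⟨hj, h⟩⟩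

namespace IsXorSubtour

variable {T : Set (Sym2 (XV p))} (hT : IsXorSubtour p T)
include hT

lemma mem_xorEdges {e : Sym2 (XV p)} (he : e ∈ T) : e ∈ xorEdges p := by
  have hG := hT.1 he
  rw [xorGadget, edgeSet_fromEdgeSet] at hG
  exact hG.1

lemma rung_mem (i : Fin p) {t : Fin 3} (ht : t ≠ 2) : s((t, i), uvx i) ∈ T := by
  have hsub : {w | (fromEdgeSet T).Adj (uvx i) w} ⊆ {av i, bv i} := fun w hw =>
    eq_av_or_bv_of_mem_xorEdges (hT.mem_xorEdges ((fromEdgeSet_adj T).mp hw).1)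
  have hdeg : gdeg (fromEdgeSet T) (uvx i) = 2 :=
    (hT.2.2.2.1 _).resolve_left fun h => uvx_notMem_xorEnds i (hT.2.2.2.2 _ h)
  have heq : {w | (fromEdgeSet T).Adj (uvx i) w} = {av i, bv i} :=
    Set.eq_of_subset_of_ncard_le hsub (by rw [Set.ncard_pair av_ne_bv, ← hdeg]; rfl)
      (Set.toFinite _)
  have hadj : (fromEdgeSet T).Adj (uvx i) (t, i) := by
    change (t, i) ∈ {w | (fromEdgeSet T).Adj (uvx i) w}
    rw [heq]
    fin_cases t <;> simp_all [av, bv]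
  exact Sym2.eq_swap ▸ ((fromEdgeSet_adj T).mp hadj).1

lemma railAt_zero_or_railAt_one {n : ℕ} (hn : n + 1 < p) : RailAt T 0 n ∨ RailAt T 1 n := by
  obtain ⟨w⟩ := hT.2.1.preconnected (av ⟨n, by omega⟩) (av ⟨n + 1, hn⟩)
  obtain ⟨d, -, hd₁, hd₂⟩ := w.exists_boundary_dart {v | (v.2 : ℕ) ≤ n} (by simp [av])
    (by simp [av])
  obtain ⟨⟨⟨t, i⟩, ⟨t', j⟩⟩, hadj⟩ := d
  have hmem : s((t, i), (t', j)) ∈ T := ((fromEdgeSet_adj T).mp hadj).1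
  simp only [Set.mem_ofPred_eq] at hd₁ hd₂
  obtain ⟨rfl, ht, rfl, hij⟩ :=
    eq_of_mem_xorEdges_of_le_of_lt (hT.mem_xorEdges hmem) hd₁ (not_le.mp hd₂)
  have := (railAt_iff hij).mpr hmem
  fin_cases t
  exacts [Or.inl this, Or.inr this, absurd rfl ht]

lemma not_railAt_zero_and_railAt_one {n : ℕ} : ¬(RailAt T 0 n ∧ RailAt T 1 n) := by
  rintro ⟨⟨hn, ha⟩, ⟨_, hb⟩⟩
  set i : Fin p := ⟨n, by omega⟩
  set j : Fin p := ⟨n + 1, hn⟩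
  have hij : av i ≠ av j := by simp [av, i, j]
  refine isAcyclic_iff_forall_adj_isBridge.mp hT.2.2.1 ((fromEdgeSet_adj T).mpr ⟨ha, hij⟩) ?_
  have detour {x y : XV p} (hm : s(x, y) ∈ T) (hne : x ≠ y) (hxy : s(x, y) ≠ s(av i, av j)) :
      ((fromEdgeSet T).deleteEdges {s(av i, av j)}).Reachable x y :=
    (deleteEdges_adj.mpr ⟨(fromEdgeSet_adj T).mpr ⟨hm, hne⟩, hxy⟩).reachable
  -- the detour `aᵢ uᵢ bᵢ bⱼ uⱼ aⱼ` around the rail `aᵢaⱼ`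
  exact (detour (hT.rung_mem i (t := 0) (by decide)) av_ne_uvx (by simp [av, uvx])).trans <|
    (detour (hT.rung_mem i (t := 1) (by decide)) bv_ne_uvx (by simp [av, uvx])).symm.trans <|
    (detour hb (by simp [i, j]) (by simp [av])).trans <|
    (detour (hT.rung_mem j (t := 1) (by decide)) bv_ne_uvx (by simp [av, uvx])).trans <|
    (detour (hT.rung_mem j (t := 0) (by decide)) av_ne_uvx (by simp [av, uvx])).symm

lemma not_railAt_and_railAt_succ {t : Fin 3} (ht : t ≠ 2) {n : ℕ} :
    ¬(RailAt T t n ∧ RailAt T t (n + 1)) := by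
  rintro ⟨⟨_, h₁⟩, ⟨hn, h₂⟩⟩
  have hadj {x y : XV p} (hm : s(x, y) ∈ T) (hne : x ≠ y) : (fromEdgeSet T).Adj x y :=
    (fromEdgeSet_adj T).mpr ⟨hm, hne⟩
  have := three_le_gdeg (hadj (Sym2.eq_swap ▸ h₁) (by simp)) (hadj h₂ (by simp))
    (hadj (hT.rung_mem ⟨n + 1, by omega⟩ ht) (by simp [uvx, ht])) (by simp; omega)
    (by simp [uvx, ht]) (by simp [uvx, ht])
  rcases hT.2.2.2.1 (t, ⟨n + 1, by omega⟩) with h | h <;> omega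

lemma railAt_zero_succ_iff {n : ℕ} (hn : n + 2 < p) :
    RailAt T 0 (n + 1) ↔ ¬RailAt T 0 n := by
  refine ⟨fun h₂ h₁ => hT.not_railAt_and_railAt_succ (by decide) ⟨h₁, h₂⟩, fun h₁ => ?_⟩
  by_contra h₂
  exact hT.not_railAt_and_railAt_succ (t := 1) (by decide)
    ⟨(hT.railAt_zero_or_railAt_one (by omega)).resolve_left h₁,
      (hT.railAt_zero_or_railAt_one hn).resolve_left h₂⟩

lemma railAt_zero_iff {n : ℕ} (hn : n + 1 < p) : RailAt T 0 n ↔ (n % 2 = 0 ↔ RailAt T 0 0) := by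
  induction n with
  | zero => simp
  | succ n ih =>
    have hpar : (n + 1) % 2 = 0 ↔ ¬n % 2 = 0 := by omega
    rw [hT.railAt_zero_succ_iff hn, ih (by omega), hpar]
    tauto

theorem exists_eq_tgen : ∃ c < 2, T = Tgen c p := by
  obtain ⟨c, hc, hA⟩ : ∃ c < 2, ∀ n, n + 1 < p → (RailAt T 0 n ↔ n % 2 = c) := by
    by_cases h₀ : RailAt T 0 0
    · exact ⟨0, by norm_num, fun n hn => by simp [hT.railAt_zero_iff hn, h₀]⟩
    · exact ⟨1, by norm_num, fun n hn => by simp [hT.railAt_zero_iff hn, h₀]⟩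
  have hB (n : ℕ) (hn : n + 1 < p) : RailAt T 1 n ↔ n % 2 = 1 - c := by
    have := hT.railAt_zero_or_railAt_one hn
    have := hT.not_railAt_zero_and_railAt_one (n := n)
    have : n % 2 = 1 - c ↔ ¬n % 2 = c := by omega
    rw [hA n hn] at *
    tauto
  refine ⟨c, hc, Set.ext fun e => ⟨fun he => ?_, fun he => ?_⟩⟩
  · rcases hT.mem_xorEdges he with ⟨i, j, hij, rfl | rfl⟩ | ⟨i, h⟩
    · exact rail_a_mem_tgen hij ((hA i (by omega)).mp ((railAt_iff hij).mpr he))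
    · exact rail_b_mem_tgen hij ((hB i (by omega)).mp ((railAt_iff hij).mpr he))
    · exact Or.inl ⟨i, h⟩
  · rcases he with ⟨i, rfl | rfl⟩ | ⟨i, j, hij, ⟨hpar, rfl⟩ | ⟨hpar, rfl⟩⟩
    · exact hT.rung_mem i (t := 0) (by decide)
    · exact hT.rung_mem i (t := 1) (by decide)
    · exact (railAt_iff hij).mp ((hA i (by omega)).mpr hpar)
    · exact (railAt_iff hij).mp ((hB i (by omega)).mpr hpar)

end IsXorSubtour

lemma isXorSubtour_iff (hp : 0 < p) {T : Set (Sym2 (XV p))} :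
    IsXorSubtour p T ↔ ∃ c < 2, T = Tgen c p :=
  ⟨IsXorSubtour.exists_eq_tgen, by rintro ⟨c, hc, rfl⟩; exact tgen_isXorSubtour hc hp⟩

lemma tgen_zero_ne_tgen_one (hp : 2 ≤ p) : Tgen 0 p ≠ Tgen 1 p := by
  intro h
  have := h ▸ rail_a_mem_tgen (c := 0) (i := ⟨0, by omega⟩) (j := ⟨1, hp⟩) rfl rfl
  simp [Tgen, av, bv, uvx, Fin.ext_iff] at this
  omega

lemma tgen_of_order_one (c : ℕ) :
    Tgen c 1 = {e | ∃ i : Fin 1, e = s(av i, uvx i) ∨ e = s(bv i, uvx i)} := by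
  ext e
  refine ⟨?_, Or.inl⟩
  rintro (h | ⟨i, j, hij, -⟩)
  · exact h
  · omega

/-- for `p ≥ 2` the XOR gadget of order `p` has exactly the two subtours
`T_a` and `T_b` (and these are distinct); for `p = 1` it has exactly one subtour, namely
the path `(a₁, u₁, b₁)`. -/
theorem stmt_4 (p : ℕ) :
    (2 ≤ p → (Ta p ≠ Tb p ∧
      ∀ T : Set (Sym2 (XV p)), IsXorSubtour p T ↔ (T = Ta p ∨ T = Tb p))) ∧
    (p = 1 → ∀ T : Set (Sym2 (XV p)), IsXorSubtour p T ↔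
      T = {e | ∃ i : Fin p, e = s(av i, uvx i) ∨ e = s(bv i, uvx i)}) := by
  refine ⟨fun hp => ⟨tgen_zero_ne_tgen_one hp, fun T => ?_⟩, ?_⟩
  · rw [isXorSubtour_iff (by omega)]
    constructor
    · rintro ⟨c, hc, rfl⟩
      interval_cases c
      exacts [Or.inl rfl, Or.inr rfl]
    · rintro (rfl | rfl)
      exacts [⟨0, by norm_num, rfl⟩, ⟨1, by norm_num, rfl⟩]
  · rintro rfl T
    simp only [isXorSubtour_iff one_pos, tgen_of_order_one]
    exact ⟨fun ⟨_, _, h⟩ => h, fun h => ⟨0, by norm_num, h⟩⟩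
end
end

section
/- The flexible gadget has exactly seven subtours, namely F1, F2, F3, F4, N1, N2, and N3. Moreover: F1 is a single path with endpoints Z and Z'; F2 is the disjoint union of a path with endpoints X and X' and a path with endpoints Z and Z'; F3 is the disjoint union of a path with endpoints Y and Y' and a path with endpoints Z and Z'; F4 is the disjoint union of three paths with endpoint pairs (X, X'), (Y, Y'), and (Z, Z'); and none of N1, N2, N3 is of one of these four types. In particular, for each of these four standard types the flexible gadget has a unique subtour of that type, and it has exactly three non-standard subtours. -/
/-! The vertices `R` and `S` may not be endpoints, so a subtour contains all four edges at `R`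
and `S`. What remains is a choice among the six edges `ZX, YZ', ZZ', X'Y', Y'Z, X'Z'`, and
the degree conditions (exactly one of them at `Z` and at `Z'`, at most one at `X'` and at
`Y'`) leave exactly the seven choices listed. Conversely, listing the vertices of each of the
seven graphs along its paths shows that it is a linear forest. -/

open SimpleGraph

noncomputable section

/-- The 8 vertices of the flexible gadget. -/
inductive FGV : Type
  | X | X' | Y | Y' | Z | Z' | R | S
  deriving DecidableEq

open FGV

/-- The four subdivision edges of the flexible gadget. -/
def flexBase : Set (Sym2 FGV) := {s(X, R), s(R, X'), s(Y', S), s(S, Y)}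

/-- The edge set of the flexible gadget. -/
def flexEdges : Set (Sym2 FGV) :=
  flexBase ∪ {s(Z, X), s(Y, Z'), s(Z, Z'), s(X', Y'), s(Y', Z), s(X', Z')}

/-- The flexible gadget. -/
def flexGadget : SimpleGraph FGV := SimpleGraph.fromEdgeSet flexEdges

/-- A subtour of the flexible gadget, given by its edge set `T`: a spanning disjoint
union of paths (acyclic, all degrees 1 or 2) in which `Z` and `Z'` have degree one and
every degree-one vertex lies in `{X, X', Y, Y', Z, Z'}`. -/
def IsFlexSubtour (T : Set (Sym2 FGV)) : Prop :=
  T ⊆ flexGadget.edgeSet ∧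
  (SimpleGraph.fromEdgeSet T).IsAcyclic ∧
  (∀ v : FGV, gdeg (SimpleGraph.fromEdgeSet T) v = 1 ∨
      gdeg (SimpleGraph.fromEdgeSet T) v = 2) ∧
  gdeg (SimpleGraph.fromEdgeSet T) Z = 1 ∧
  gdeg (SimpleGraph.fromEdgeSet T) Z' = 1 ∧
  (∀ v : FGV, gdeg (SimpleGraph.fromEdgeSet T) v = 1 →
      v ∈ ({X, X', Y, Y', Z, Z'} : Set FGV))

/-- The four standard subtours of the flexible gadget. -/
def F1 : Set (Sym2 FGV) := flexBase ∪ {s(Z, X), s(Y, Z'), s(X', Y')}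
def F2 : Set (Sym2 FGV) := flexBase ∪ {s(Y, Z'), s(Y', Z)}
def F3 : Set (Sym2 FGV) := flexBase ∪ {s(Z, X), s(X', Z')}
def F4 : Set (Sym2 FGV) := flexBase ∪ {s(Z, Z')}

/-- The three non-standard subtours of the flexible gadget. -/
def N1 : Set (Sym2 FGV) := flexBase ∪ {s(Y', Z), s(X', Z')}
def N2 : Set (Sym2 FGV) := flexBase ∪ {s(Z, Z'), s(X', Y')}
def N3 : Set (Sym2 FGV) := flexBase ∪ {s(Z, X), s(Z', Y)}

/-- `G` is a single spanning path with endpoints `z` and `z'`. -/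
def IsOnePath {W : Type*} (G : SimpleGraph W) (z z' : W) : Prop :=
  G.IsAcyclic ∧ (∀ v : W, gdeg G v = 1 ∨ gdeg G v = 2) ∧
  {v | gdeg G v = 1} = {z, z'} ∧ z ≠ z' ∧ G.Reachable z z'

/-- `G` is a spanning disjoint union of an `xx'`-path and a `zz'`-path. -/
def IsTwoPaths {W : Type*} (G : SimpleGraph W) (x x' z z' : W) : Prop :=
  G.IsAcyclic ∧ (∀ v : W, gdeg G v = 1 ∨ gdeg G v = 2) ∧
  {v | gdeg G v = 1} = {x, x', z, z'} ∧ [x, x', z, z'].Nodup ∧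
  G.Reachable x x' ∧ G.Reachable z z' ∧ ¬ G.Reachable x z

/-- `G` is a spanning disjoint union of an `xx'`-path, a `yy'`-path and a `zz'`-path. -/
def IsThreePaths {W : Type*} (G : SimpleGraph W) (x x' y y' z z' : W) : Prop :=
  G.IsAcyclic ∧ (∀ v : W, gdeg G v = 1 ∨ gdeg G v = 2) ∧
  {v | gdeg G v = 1} = {x, x', y, y', z, z'} ∧ [x, x', y, y', z, z'].Nodup ∧
  G.Reachable x x' ∧ G.Reachable y y' ∧ G.Reachable z z' ∧
  ¬ G.Reachable x y ∧ ¬ G.Reachable x z ∧ ¬ G.Reachable y z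

/-- `T` is of one of the four standard types: a single `ZZ'`-path; an `XX'`-path plus a
`ZZ'`-path; a `YY'`-path plus a `ZZ'`-path; or an `XX'`-path, a `YY'`-path and a
`ZZ'`-path. -/
def IsStandardType (T : Set (Sym2 FGV)) : Prop :=
  IsOnePath (SimpleGraph.fromEdgeSet T) Z Z' ∨
  IsTwoPaths (SimpleGraph.fromEdgeSet T) X X' Z Z' ∨
  IsTwoPaths (SimpleGraph.fromEdgeSet T) Y Y' Z Z' ∨
  IsThreePaths (SimpleGraph.fromEdgeSet T) X X' Y Y' Z Z'

section General

variable {V : Type*}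

theorem gdeg_eq_degree (G : SimpleGraph V) (v : V) [Fintype (G.neighborSet v)] :
    gdeg G v = G.degree v :=
  Set.ncard_eq_toFinset_card' (G.neighborSet v)

theorem gdeg_eq_ncard_incidenceSet (G : SimpleGraph V) (v : V) :
    gdeg G v = (G.incidenceSet v).ncard := by
  classical
  exact (Set.ncard_congr' (G.incidenceSetEquivNeighborSet v)).symm

theorem gdeg_fromEdgeSet_eq_countP [DecidableEq V] {T : Set (Sym2 V)} [DecidablePred (· ∈ T)]
    {l : List (Sym2 V)} (hl : l.Nodup) (hdiag : ∀ e ∈ l, ¬e.IsDiag) (hT : T ⊆ {e | e ∈ l})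
    (v : V) : gdeg (fromEdgeSet T) v = (l.filter (v ∈ ·)).countP (· ∈ T) := by
  have hinc :
      (fromEdgeSet T).incidenceSet v = ↑((l.filter (v ∈ ·)).filter (· ∈ T)).toFinset := by
    ext e
    simp only [incidenceSet, edgeSet_fromEdgeSet, List.coe_toFinset, List.mem_filter,
      decide_eq_true_eq, Set.mem_ofPred_eq, Set.mem_sdiff, Sym2.mem_diagSet]
    constructor
    · rintro ⟨⟨he, -⟩, hv⟩
      exact ⟨⟨hT he, hv⟩, he⟩
    · rintro ⟨⟨hel, hv⟩, he⟩
      exact ⟨⟨he, hdiag e hel⟩, hv⟩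
  rw [gdeg_eq_ncard_incidenceSet, hinc, Set.ncard_coe_finset,
    List.toFinset_card_of_nodup ((hl.filter _).filter _), List.countP_eq_length_filter]

/-- The maximum of `f` on a cycle would have two distinct lower neighbours on it. -/
theorem SimpleGraph.isAcyclic_of_unique_lower_neighbor {G : SimpleGraph V} (f : V → ℕ)
    (hf : Function.Injective f)
    (h : ∀ u v w, G.Adj u v → G.Adj u w → f v < f u → f w < f u → v = w) :
    G.IsAcyclic := by
  classical
  intro a c hc
  obtain ⟨m, hm, hmax⟩ := c.support.toFinset.exists_max_image f ⟨a, by simp⟩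
  rw [List.mem_toFinset] at hm
  have hc' := hc.rotate hm
  have hlt : ∀ x ∈ (c.rotate m hm).support, G.Adj m x → f x < f m := fun x hx hadj =>
    (hmax x (by simpa using hx)).lt_of_ne (hf.ne hadj.ne.symm)
  have hsnd := Walk.adj_snd hc'.not_nil
  have hpen := (Walk.adj_penultimate hc'.not_nil).symm
  exact hc'.snd_ne_penultimate <| h m _ _ hsnd hpen
    (hlt _ (Walk.getVert_mem_support _ _) hsnd) (hlt _ (Walk.getVert_mem_support _ _) hpen)

instance Set.decidableEqOfFintype [Fintype V] (s t : Set V) [DecidablePred (· ∈ s)]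
    [DecidablePred (· ∈ t)] : Decidable (s = t) :=
  decidable_of_iff (∀ a, a ∈ s ↔ a ∈ t) Set.ext_iff.symm

end General

instance : Fintype FGV :=
  ⟨{X, X', Y, Y', Z, Z', R, S}, fun v => by cases v <;> decide⟩

instance : DecidablePred (· ∈ flexBase) := fun _ => by unfold flexBase; infer_instance
instance : DecidablePred (· ∈ F1) := fun _ => by unfold F1; infer_instance
instance : DecidablePred (· ∈ F2) := fun _ => by unfold F2; infer_instance
instance : DecidablePred (· ∈ F3) := fun _ => by unfold F3; infer_instance
instance : DecidablePred (· ∈ F4) := fun _ => by unfold F4; infer_instance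
instance : DecidablePred (· ∈ N1) := fun _ => by unfold N1; infer_instance
instance : DecidablePred (· ∈ N2) := fun _ => by unfold N2; infer_instance
instance : DecidablePred (· ∈ N3) := fun _ => by unfold N3; infer_instance

def flexEdgeList : List (Sym2 FGV) :=
  [s(X, R), s(R, X'), s(Y', S), s(S, Y), s(Z, X), s(Y, Z'), s(Z, Z'), s(X', Y'), s(Y', Z),
    s(X', Z')]

-- Edges are written and ordered as in `flexEdgeList`.
def flexIncident : FGV → List (Sym2 FGV)
  | X => [s(X, R), s(Z, X)]
  | X' => [s(R, X'), s(X', Y'), s(X', Z')]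
  | Y => [s(S, Y), s(Y, Z')]
  | Y' => [s(Y', S), s(X', Y'), s(Y', Z)]
  | Z => [s(Z, X), s(Z, Z'), s(Y', Z)]
  | Z' => [s(Y, Z'), s(Z, Z'), s(X', Z')]
  | R => [s(X, R), s(R, X')]
  | S => [s(Y', S), s(S, Y)]

theorem flexEdges_eq_setOf_mem_flexEdgeList : flexEdges = {e | e ∈ flexEdgeList} := by
  ext e
  simp only [flexEdges, flexBase, flexEdgeList, Set.mem_union, Set.mem_insert_iff,
    Set.mem_singleton_iff, Set.mem_ofPred_eq, List.mem_cons, List.not_mem_nil, or_false]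
  tauto

theorem edgeSet_flexGadget : flexGadget.edgeSet = flexEdges := by
  rw [flexGadget, edgeSet_fromEdgeSet, sdiff_eq_left, flexEdges_eq_setOf_mem_flexEdgeList,
    Set.disjoint_left]
  exact fun e he hd => (by decide : ∀ e ∈ flexEdgeList, ¬e.IsDiag) e he hd

theorem gdeg_eq_countP_flexIncident {T : Set (Sym2 FGV)} [DecidablePred (· ∈ T)]
    (hT : T ⊆ flexEdges) (v : FGV) :
    gdeg (fromEdgeSet T) v = (flexIncident v).countP (· ∈ T) := by
  rw [gdeg_fromEdgeSet_eq_countP (by decide) (by decide)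
    (flexEdges_eq_setOf_mem_flexEdgeList ▸ hT) v]
  cases v <;> rfl

theorem eq_iff_forall_mem_flexEdgeList {T T' : Set (Sym2 FGV)} (hT : T ⊆ flexEdges)
    (hT' : T' ⊆ flexEdges) : T = T' ↔ ∀ e ∈ flexEdgeList, e ∈ T ↔ e ∈ T' := by
  rw [flexEdges_eq_setOf_mem_flexEdgeList] at hT hT'
  exact ⟨fun h _ _ => h ▸ Iff.rfl, fun h => Set.ext fun e =>
    ⟨fun he => (h e (hT he)).1 he, fun he => (h e (hT' he)).2 he⟩⟩

theorem subtours_subset_flexEdges :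
    F1 ⊆ flexEdges ∧ F2 ⊆ flexEdges ∧ F3 ⊆ flexEdges ∧ F4 ⊆ flexEdges ∧
      N1 ⊆ flexEdges ∧ N2 ⊆ flexEdges ∧ N3 ⊆ flexEdges := by
  refine ⟨?_, ?_, ?_, ?_, ?_, ?_, ?_⟩ <;>
    exact Set.union_subset_union_right _ (by simp [Set.insert_subset_iff, Sym2.eq_swap])

theorem eq_of_isFlexSubtour {T : Set (Sym2 FGV)} (h : IsFlexSubtour T) :
    T = F1 ∨ T = F2 ∨ T = F3 ∨ T = F4 ∨ T = N1 ∨ T = N2 ∨ T = N3 := by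
  have := Classical.decPred (· ∈ T)
  obtain ⟨hsub, -, hdeg, hZ, hZ', hend⟩ := h
  have hT : T ⊆ flexEdges := edgeSet_flexGadget ▸ hsub
  have hR := (hdeg R).resolve_left fun h1 => by simpa using hend R h1
  have hS := (hdeg S).resolve_left fun h1 => by simpa using hend S h1
  have hX' := hdeg X'
  have hY' := hdeg Y'
  simp only [gdeg_eq_countP_flexIncident hT, flexIncident, List.countP_cons, List.countP_nil,
    decide_eq_true_eq, zero_add] at hR hS hZ hZ' hX' hY'
  obtain ⟨hXR, hRX'⟩ : s(X, R) ∈ T ∧ s(R, X') ∈ T := by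
    split_ifs at hR <;> first | omega | exact ⟨‹_›, ‹_›⟩
  obtain ⟨hY'S, hSY⟩ : s(Y', S) ∈ T ∧ s(S, Y) ∈ T := by
    split_ifs at hS <;> first | omega | exact ⟨‹_›, ‹_›⟩
  simp only [eq_iff_forall_mem_flexEdgeList hT, subtours_subset_flexEdges, flexEdgeList,
    List.forall_mem_cons, List.not_mem_nil, IsEmpty.forall_iff, implies_true, and_true, hXR,
    hRX', hY'S, hSY, if_true, true_iff]
    at hX' hY' ⊢
  by_cases hZX : s(Z, X) ∈ T <;> by_cases hYZ' : s(Y, Z') ∈ T <;>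
    by_cases hZZ' : s(Z, Z') ∈ T <;> by_cases hX'Y' : s(X', Y') ∈ T <;>
    by_cases hY'Z : s(Y', Z) ∈ T <;> by_cases hX'Z' : s(X', Z') ∈ T <;>
    simp only [hZX, hYZ', hZZ', hX'Y', hY'Z, hX'Z', if_true, if_false, true_iff, false_iff]
      at hZ hZ' hX' hY' ⊢ <;>
    first | omega | simp [F1, F2, F3, F4, N1, N2, N3, flexBase]

/-- Each list runs through the paths of the subtour one after another. -/
theorem isAcyclic_subtours :
    (fromEdgeSet F1).IsAcyclic ∧ (fromEdgeSet F2).IsAcyclic ∧ (fromEdgeSet F3).IsAcyclic ∧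
      (fromEdgeSet F4).IsAcyclic ∧ (fromEdgeSet N1).IsAcyclic ∧ (fromEdgeSet N2).IsAcyclic ∧
      (fromEdgeSet N3).IsAcyclic := by
  refine ⟨?_, ?_, ?_, ?_, ?_, ?_, ?_⟩
  · exact isAcyclic_of_unique_lower_neighbor [Z, X, R, X', Y', S, Y, Z'].idxOf
      (by decide) (by decide)
  · exact isAcyclic_of_unique_lower_neighbor [X, R, X', Z, Y', S, Y, Z'].idxOf
      (by decide) (by decide)
  · exact isAcyclic_of_unique_lower_neighbor [Y, S, Y', Z, X, R, X', Z'].idxOf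
      (by decide) (by decide)
  · exact isAcyclic_of_unique_lower_neighbor [X, R, X', Y, S, Y', Z, Z'].idxOf
      (by decide) (by decide)
  · exact isAcyclic_of_unique_lower_neighbor [Z, Y', S, Y, X, R, X', Z'].idxOf
      (by decide) (by decide)
  · exact isAcyclic_of_unique_lower_neighbor [X, R, X', Y', S, Y, Z, Z'].idxOf
      (by decide) (by decide)
  · exact isAcyclic_of_unique_lower_neighbor [Z, X, R, X', Y', S, Y, Z'].idxOf
      (by decide) (by decide)

theorem isFlexSubtour_of_eq {T : Set (Sym2 FGV)}
    (h : T = F1 ∨ T = F2 ∨ T = F3 ∨ T = F4 ∨ T = N1 ∨ T = N2 ∨ T = N3) :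
    IsFlexSubtour T := by
  obtain ⟨s1, s2, s3, s4, s5, s6, s7⟩ := subtours_subset_flexEdges
  obtain ⟨a1, a2, a3, a4, a5, a6, a7⟩ := isAcyclic_subtours
  simp only [IsFlexSubtour, edgeSet_flexGadget]
  rcases h with rfl | rfl | rfl | rfl | rfl | rfl | rfl <;>
    refine ⟨‹_›, ‹_›, ?_⟩ <;> simp only [gdeg_eq_degree] <;> decide

theorem standard_subtours_paths :
    IsOnePath (fromEdgeSet F1) Z Z' ∧ IsTwoPaths (fromEdgeSet F2) X X' Z Z' ∧
      IsTwoPaths (fromEdgeSet F3) Y Y' Z Z' ∧ IsThreePaths (fromEdgeSet F4) X X' Y Y' Z Z' := by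
  obtain ⟨a1, a2, a3, a4, -⟩ := isAcyclic_subtours
  simp only [IsOnePath, IsTwoPaths, IsThreePaths, gdeg_eq_degree]
  exact ⟨⟨a1, by decide⟩, ⟨a2, by decide⟩, ⟨a3, by decide⟩, ⟨a4, by decide⟩⟩

theorem IsStandardType.gdeg_X_eq_one_iff {T : Set (Sym2 FGV)} (h : IsStandardType T) :
    gdeg (fromEdgeSet T) X = 1 ↔ gdeg (fromEdgeSet T) X' = 1 := by
  rcases h with ⟨-, -, h, -⟩ | ⟨-, -, h, -⟩ | ⟨-, -, h, -⟩ | ⟨-, -, h, -⟩ <;>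
    simp only [Set.ext_iff, Set.mem_ofPred_eq, Set.mem_insert_iff, Set.mem_singleton_iff]
      at h <;>
    simp [h]

theorem not_isStandardType_nonstandard_subtours :
    ¬IsStandardType N1 ∧ ¬IsStandardType N2 ∧ ¬IsStandardType N3 := by
  refine ⟨?_, ?_, ?_⟩ <;>
    exact mt IsStandardType.gdeg_X_eq_one_iff (by simp only [gdeg_eq_degree]; decide)

theorem nodup_subtours : [F1, F2, F3, F4, N1, N2, N3].Nodup := by
  simp only [List.nodup_cons, List.mem_cons, List.not_mem_nil, or_false, List.nodup_nil,
    and_true, not_or]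
  and_intros <;> decide

/-- the flexible gadget has exactly the seven subtours
`F1, F2, F3, F4, N1, N2, N3`; they are pairwise distinct; `F1` is a single `ZZ'`-path;
`F2` is an `XX'`-path plus a `ZZ'`-path; `F3` is a `YY'`-path plus a `ZZ'`-path; `F4`
consists of an `XX'`-path, a `YY'`-path and a `ZZ'`-path; and none of `N1, N2, N3` is
of one of these four standard types. -/
theorem stmt_10 :
    (∀ T : Set (Sym2 FGV), IsFlexSubtour T ↔
      (T = F1 ∨ T = F2 ∨ T = F3 ∨ T = F4 ∨ T = N1 ∨ T = N2 ∨ T = N3)) ∧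
    [F1, F2, F3, F4, N1, N2, N3].Nodup ∧
    IsOnePath (SimpleGraph.fromEdgeSet F1) Z Z' ∧
    IsTwoPaths (SimpleGraph.fromEdgeSet F2) X X' Z Z' ∧
    IsTwoPaths (SimpleGraph.fromEdgeSet F3) Y Y' Z Z' ∧
    IsThreePaths (SimpleGraph.fromEdgeSet F4) X X' Y Y' Z Z' ∧
    ¬ IsStandardType N1 ∧ ¬ IsStandardType N2 ∧ ¬ IsStandardType N3 := by
  obtain ⟨h1, h2, h3, h4⟩ := standard_subtours_paths
  obtain ⟨n1, n2, n3⟩ := not_isStandardType_nonstandard_subtours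
  exact ⟨fun _ => ⟨eq_of_isFlexSubtour, isFlexSubtour_of_eq⟩, nodup_subtours, h1, h2, h3, h4,
    n1, n2, n3⟩
end
end
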